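/- For all positive integers n and k with n·k ≥ 2, the dichromatic number of the blow-up of the complete graph K_n with power k satisfies χ⃗(K_n^(k)) > min{ n·k / (4·log₂(n·k)), n/2 }. -/

import Mathlib

/-!
Orient every edge by an independent fair coin. A set of `m` vertices is acyclic only if all its
arcs point forward along some ordering of it, so the expected number of acyclic `m`-sets is at most
`N (N - 1) ⋯ (N - m + 1) · 2^(-e)`, where `e` is the least number of edges spanned by an `m`-set.
In `K_n^(k)` a vertex misses only the `k` vertices of its own part, so `2e ≥ m (m - k)`, and
`e ≥ m log₂ N` once `m ≥ max (4 log₂ N) (2k)`; then the expectation is below one. Some orientation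
therefore has no acyclic set of size `m`, whence `N ≤ χ⃗ · (m - 1) < χ⃗ · max (4 log₂ N) (2k)`,
and `N / (2k) = n / 2` for `N = nk`.
-/

/-- An orientation of a simple graph `G`: a relation choosing exactly one
direction for each edge of `G` (and relating no non-adjacent pair). -/
def IsOrientation {V : Type*} (G : SimpleGraph V) (D : V → V → Prop) : Prop :=
  (∀ u v, D u v → G.Adj u v) ∧ ∀ u v, G.Adj u v → (D u v ↔ ¬ D v u)

/-- A set `A` of vertices is acyclic for the digraph `D` if the digraph induced
on `A` contains no directed cycle (no vertex reaches itself by a nonempty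
directed walk inside `A`). -/
def IsAcyclicOn {V : Type*} (D : V → V → Prop) (A : Set V) : Prop :=
  ∀ x ∈ A, ¬ Relation.TransGen (fun a b => a ∈ A ∧ b ∈ A ∧ D a b) x x

/-- A set `A` of vertices contains a directed cycle of the digraph `D`. -/
def HasDirCycleOn {V : Type*} (D : V → V → Prop) (A : Set V) : Prop :=
  ∃ x ∈ A, Relation.TransGen (fun a b => a ∈ A ∧ b ∈ A ∧ D a b) x x

/-- The chromatic number of a digraph `D`: the minimum number of acyclic
vertex-sets whose union is the whole vertex set. -/
noncomputable def digraphChrom {V : Type*} (D : V → V → Prop) : ℕ :=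
  sInf {k : ℕ | ∃ f : V → Fin k, ∀ i : Fin k, IsAcyclicOn D {v | f v = i}}

/-- The dichromatic number of an undirected graph: the maximum chromatic number
over all orientations of its edges. -/
noncomputable def dichromatic {V : Type*} (G : SimpleGraph V) : ℕ :=
  sSup {k : ℕ | ∃ D : V → V → Prop, IsOrientation G D ∧ k = digraphChrom D}

/-- The blow-up of a simple graph `H` with power `m`: each vertex is replaced by
an independent set of size `m`, each edge by a complete bipartite graph `K_{m,m}`. -/
def blowup {α : Type*} (H : SimpleGraph α) (m : ℕ) : SimpleGraph (α × Fin m) where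
  Adj a b := H.Adj a.1 b.1
  symm := ⟨fun _ _ h => H.adj_symm h⟩
  loopless := ⟨fun a h => H.loopless.irrefl a.1 h⟩

open Finset Relation

theorem exists_equiv_fin_of_not_transGen_self {α : Type*} [Fintype α] {r : α → α → Prop}
    (hr : ∀ a, ¬ TransGen r a a) {m : ℕ} (hm : Fintype.card α = m) :
    ∃ e : Fin m ≃ α, ∀ i j, r (e i) (e j) → i < j := by
  let _ : PartialOrder α :=
    { le := ReflTransGen r
      le_refl := fun _ => .refl
      le_trans := fun _ _ _ => .trans
      le_antisymm := fun a b hab hba => by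
        rcases reflTransGen_iff_eq_or_transGen.1 hab with rfl | hab
        · rfl
        · exact (hr a (hab.trans_left hba)).elim }
  have hlt {a b : α} (h : r a b) : a < b :=
    lt_of_le_not_ge (.single h) fun hba => hr a (TransGen.head' h hba)
  let _ : Fintype (LinearExtension α) := ‹Fintype α›
  let e := Fintype.orderIsoFinOfCardEq (LinearExtension α) hm
  have hmono : StrictMono (toLinearExtension : α →o LinearExtension α) :=
    toLinearExtension.monotone.strictMono_of_injective fun _ _ h => h
  exact ⟨e.toEquiv, fun i j h => e.lt_iff_lt.1 (hmono (hlt h))⟩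

section Digraph

variable {V : Type*} {D : V → V → Prop}

theorem IsAcyclicOn.mono {A B : Set V} (hA : IsAcyclicOn D A) (hBA : B ⊆ A) :
    IsAcyclicOn D B := fun x hx hcyc =>
  hA x (hBA hx) (TransGen.mono (fun _ _ h => ⟨hBA h.1, hBA h.2.1, h.2.2⟩) x x hcyc)

theorem IsAcyclicOn.exists_embedding_fin {A : Finset V} (hA : IsAcyclicOn D A) :
    ∃ φ : Fin #A ↪ V, ∀ i j, D (φ i) (φ j) → i < j := by
  have hr (a : A) : ¬ TransGen (fun a b : A => D a b) a a := fun h =>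
    hA a a.2 (h.lift _ fun a b hab => ⟨a.2, b.2, hab⟩)
  obtain ⟨e, he⟩ := exists_equiv_fin_of_not_transGen_self hr (Fintype.card_coe A)
  exact ⟨e.toEmbedding.trans (.subtype _), he⟩

theorem IsOrientation.irrefl {G : SimpleGraph V} (hD : IsOrientation G D) (v : V) : ¬ D v v :=
  fun h => G.loopless.irrefl v (hD.1 v v h)

theorem isAcyclicOn_of_subsingleton (hD : ∀ v, ¬ D v v) {A : Set V} (hA : A.Subsingleton) :
    IsAcyclicOn D A := fun x _ hcyc => by
  obtain ⟨y, ⟨hx, hy, hxy⟩, -⟩ := TransGen.head'_iff.1 hcyc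
  exact hD x (hA hx hy ▸ hxy)

variable [Fintype V]

theorem exists_acyclic_coloring_fin_card (hD : ∀ v, ¬ D v v) :
    ∃ f : V → Fin (Fintype.card V), ∀ i, IsAcyclicOn D {v | f v = i} :=
  ⟨Fintype.equivFin V, fun _ => isAcyclicOn_of_subsingleton hD fun _ ha _ hb =>
    (Fintype.equivFin V).injective (ha.trans hb.symm)⟩

theorem digraphChrom_le_card (hD : ∀ v, ¬ D v v) : digraphChrom D ≤ Fintype.card V :=
  Nat.sInf_le (exists_acyclic_coloring_fin_card hD)

theorem exists_acyclic_coloring_fin_digraphChrom (hD : ∀ v, ¬ D v v) :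
    ∃ f : V → Fin (digraphChrom D), ∀ i, IsAcyclicOn D {v | f v = i} :=
  Nat.sInf_mem (s := {k | ∃ f : V → Fin k, ∀ i, IsAcyclicOn D {v | f v = i}})
    ⟨_, exists_acyclic_coloring_fin_card hD⟩

theorem card_le_digraphChrom_mul (hD : ∀ v, ¬ D v v) {t : ℕ}
    (ht : ∀ A : Finset V, IsAcyclicOn D A → #A ≤ t) : Fintype.card V ≤ digraphChrom D * t := by
  classical
  obtain ⟨f, hf⟩ := exists_acyclic_coloring_fin_digraphChrom hD
  calc Fintype.card V = ∑ i, #{v | f v = i} := card_eq_sum_card_fiberwise fun v _ => mem_univ (f v)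
    _ ≤ ∑ _i : Fin (digraphChrom D), t := sum_le_sum fun i _ => ht _ (by simpa using hf i)
    _ = digraphChrom D * t := by simp

theorem digraphChrom_le_dichromatic {G : SimpleGraph V} (hD : IsOrientation G D) :
    digraphChrom D ≤ dichromatic G :=
  le_csSup ⟨Fintype.card V, by rintro _ ⟨D', hD', rfl⟩; exact digraphChrom_le_card hD'.irrefl⟩
    ⟨D, hD, rfl⟩

end Digraph

theorem card_mul_pow_card_le_of_eqOn {α β : Type*} [Fintype α] [DecidableEq α] [Fintype β]
    [DecidableEq β] {T : Finset (α → β)} {s : Finset α}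
    (hT : ∀ f ∈ T, ∀ g ∈ T, ∀ x ∈ s, f x = g x) :
    #T * Fintype.card β ^ #s ≤ Fintype.card β ^ Fintype.card α := by
  have hinj : Set.InjOn (fun (f : α → β) (x : {x // x ∉ s}) => f x) T := fun f hf g hg hfg =>
    funext fun x => if hx : x ∈ s then hT f hf g hg x hx else congrFun hfg ⟨x, hx⟩
  calc #T * Fintype.card β ^ #s
      ≤ #(univ : Finset ({x // x ∉ s} → β)) * Fintype.card β ^ #s := by
        gcongr
        exact card_le_card_of_injOn _ (fun _ _ => mem_coe.2 (mem_univ _)) hinj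
    _ = Fintype.card β ^ Fintype.card α := by
        rw [card_univ, Fintype.card_fun, Fintype.card_subtype_compl, Fintype.card_coe, ← pow_add,
          Nat.sub_add_cancel (card_le_univ s)]

theorem pow_le_two_pow_of_mul_logb_le {N m P : ℕ} (hN : 0 < N)
    (h : m * Real.logb 2 N ≤ P) : N ^ m ≤ 2 ^ P := by
  have : (N : ℝ) ^ m ≤ (2 : ℝ) ^ P :=
    calc (N : ℝ) ^ m = (2 : ℝ) ^ (m * Real.logb 2 N) := by
          rw [mul_comm, Real.rpow_mul zero_le_two, Real.rpow_logb zero_lt_two (by norm_num)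
            (by exact_mod_cast hN), Real.rpow_natCast]
      _ ≤ (2 : ℝ) ^ (P : ℝ) := Real.rpow_le_rpow_of_exponent_le one_le_two h
      _ = (2 : ℝ) ^ P := Real.rpow_natCast _ _
  exact_mod_cast this

namespace SimpleGraph

variable {V : Type*} [LinearOrder V] (G : SimpleGraph V)

/-- Only the coins `g (u, v)` with `u < v` matter, so a uniformly random table `g` yields a
uniformly random orientation of `G`. -/
def orientBy (g : V × V → Bool) (u v : V) : Prop :=
  G.Adj u v ∧ (u < v ∧ g (u, v) = true ∨ v < u ∧ g (v, u) = false)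

theorem isOrientation_orientBy (g : V × V → Bool) : IsOrientation G (G.orientBy g) := by
  refine ⟨fun _ _ h => h.1, fun u v huv => ?_⟩
  rcases lt_trichotomy u v with h | rfl | h
  · cases g (u, v) <;> simp [orientBy, huv, huv.symm, h, h.not_gt]
  · exact (G.loopless.irrefl u huv).elim
  · cases g (v, u) <;> simp [orientBy, huv, huv.symm, h, h.not_gt]

theorem coin_eq_decide_of_forall_orientBy {m : ℕ} {g : V × V → Bool} {φ : Fin m ↪ V}
    (hg : ∀ i j, G.orientBy g (φ i) (φ j) → i < j) {i j : Fin m} (hlt : φ i < φ j)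
    (hadj : G.Adj (φ i) (φ j)) : g (φ i, φ j) = decide (i < j) := by
  cases h : g (φ i, φ j)
  · simp [(hg j i ⟨hadj.symm, .inr ⟨hlt, h⟩⟩).not_gt]
  · simp [hg i j ⟨hadj, .inl ⟨hlt, h⟩⟩]

variable [DecidableRel G.Adj]

def edgesIn (A : Finset V) : Finset (V × V) :=
  {p ∈ A ×ˢ A | p.1 < p.2 ∧ G.Adj p.1 p.2}

theorem card_filter_adj_eq_two_mul_card_edgesIn (A : Finset V) :
    #{p ∈ A ×ˢ A | G.Adj p.1 p.2} = 2 * #(G.edgesIn A) := by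
  have hsplit : {p ∈ A ×ˢ A | G.Adj p.1 p.2}
      = G.edgesIn A ∪ (G.edgesIn A).map (Equiv.prodComm V V).toEmbedding := by
    ext ⟨u, v⟩
    simp [edgesIn]
    grind [SimpleGraph.adj_comm, SimpleGraph.Adj.ne]
  have hdisj : Disjoint (G.edgesIn A) ((G.edgesIn A).map (Equiv.prodComm V V).toEmbedding) := by
    rw [Finset.disjoint_left]
    rintro ⟨u, v⟩ h1 h2
    simp only [edgesIn, mem_map_equiv, mem_filter] at h1 h2
    exact lt_asymm h1.2.1 h2.2.1
  rw [hsplit, card_union_of_disjoint hdisj, card_map, two_mul]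

variable [Fintype V]

theorem card_mul_self_le_two_mul_card_edgesIn_add {k : ℕ}
    (hk : ∀ v, #{w | ¬ G.Adj v w} ≤ k) (A : Finset V) :
    #A * #A ≤ 2 * #(G.edgesIn A) + #A * k := by
  have hnon : #{p ∈ A ×ˢ A | ¬ G.Adj p.1 p.2} ≤ #A * k :=
    calc #{p ∈ A ×ˢ A | ¬ G.Adj p.1 p.2}
        ≤ #(A.biUnion fun v => ({v} : Finset V) ×ˢ ({w | ¬ G.Adj v w} : Finset V)) := by
          refine card_le_card fun p hp => ?_
          simp only [mem_filter, mem_product, mem_biUnion, mem_univ, true_and] at hp ⊢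
          exact ⟨p.1, hp.1.1, mem_singleton_self _, hp.2⟩
      _ ≤ ∑ v ∈ A, #(({v} : Finset V) ×ˢ ({w | ¬ G.Adj v w} : Finset V)) := card_biUnion_le
      _ ≤ ∑ _v ∈ A, k := sum_le_sum fun v _ => by simpa using hk v
      _ = #A * k := by simp
  rw [← card_product, ← G.card_filter_adj_eq_two_mul_card_edgesIn,
    ← card_filter_add_card_filter_not (fun p : V × V => G.Adj p.1 p.2)]
  omega

theorem pow_card_le_two_pow_card_edgesIn [Nonempty V] {k m : ℕ}
    (hk : ∀ v, #{w | ¬ G.Adj v w} ≤ k) (hlog : 4 * Real.logb 2 (Fintype.card V) ≤ m)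
    (hkm : 2 * k ≤ m) {A : Finset V} (hA : #A = m) :
    Fintype.card V ^ m ≤ 2 ^ #(G.edgesIn A) := by
  apply pow_le_two_pow_of_mul_logb_le Fintype.card_pos
  have h := G.card_mul_self_le_two_mul_card_edgesIn_add hk A
  rw [hA] at h
  have h' : (m : ℝ) * m ≤ 2 * #(G.edgesIn A) + m * k := by exact_mod_cast h
  have hkm' : (2 : ℝ) * k ≤ m := by exact_mod_cast hkm
  nlinarith

open scoped Classical in
theorem card_filter_forall_orientBy_mul_le {m : ℕ} (φ : Fin m ↪ V) :
    #{g | ∀ i j, G.orientBy g (φ i) (φ j) → i < j} * 2 ^ #(G.edgesIn (univ.map φ))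
      ≤ 2 ^ Fintype.card (V × V) := by
  simpa using card_mul_pow_card_le_of_eqOn (β := Bool) (s := G.edgesIn (univ.map φ))
    (T := {g | ∀ i j, G.orientBy g (φ i) (φ j) → i < j}) fun f hf g hg ⟨u, v⟩ hp => by
      obtain ⟨⟨⟨i, rfl⟩, ⟨j, rfl⟩⟩, hlt, hadj⟩ :
          ((∃ i, φ i = u) ∧ ∃ j, φ j = v) ∧ u < v ∧ G.Adj u v := by
        simpa [edgesIn] using hp
      rw [G.coin_eq_decide_of_forall_orientBy (mem_filter.1 hf).2 hlt hadj,
        G.coin_eq_decide_of_forall_orientBy (mem_filter.1 hg).2 hlt hadj]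

open scoped Classical in
theorem exists_forall_card_eq_not_isAcyclicOn_orientBy [Nonempty V] {m : ℕ} (hm : 2 ≤ m)
    (hE : ∀ A : Finset V, #A = m → Fintype.card V ^ m ≤ 2 ^ #(G.edgesIn A)) :
    ∃ g, ∀ A : Finset V, #A = m → ¬ IsAcyclicOn (G.orientBy g) A := by
  set N := Fintype.card V
  let bad : Finset (V × V → Bool) := {g | ∃ A : Finset V, #A = m ∧ IsAcyclicOn (G.orientBy g) A}
  let T (φ : Fin m ↪ V) : Finset (V × V → Bool) := {g | ∀ i j, G.orientBy g (φ i) (φ j) → i < j}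
  have hcover : bad ⊆ univ.biUnion T := by
    intro g hg
    obtain ⟨A, rfl, hA⟩ := (mem_filter.1 hg).2
    obtain ⟨φ, hφ⟩ := hA.exists_embedding_fin
    exact mem_biUnion.2 ⟨φ, mem_univ _, mem_filter.2 ⟨mem_univ _, hφ⟩⟩
  have hbad : #bad * N ^ m < 2 ^ Fintype.card (V × V) * N ^ m :=
    calc #bad * N ^ m ≤ (∑ φ, #(T φ)) * N ^ m := by
          gcongr
          exact (card_le_card hcover).trans card_biUnion_le
      _ = ∑ φ, #(T φ) * N ^ m := sum_mul ..
      _ ≤ ∑ _φ : Fin m ↪ V, 2 ^ Fintype.card (V × V) := sum_le_sum fun φ _ =>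
          (Nat.mul_le_mul_left _ (hE _ (by simp))).trans (G.card_filter_forall_orientBy_mul_le φ)
      _ = N.descFactorial m * 2 ^ Fintype.card (V × V) := by
          simp [Fintype.card_embedding_eq, N]
      _ < 2 ^ Fintype.card (V × V) * N ^ m := by
          rw [mul_comm]
          gcongr
          exact Nat.descFactorial_lt_pow Fintype.card_ne_zero hm
  obtain ⟨g, -, hg⟩ := exists_mem_notMem_of_card_lt_card (s := bad) (t := univ)
    (by simpa using lt_of_mul_lt_mul_right hbad)
  exact ⟨g, fun A hA hAc => hg (mem_filter.2 ⟨mem_univ _, A, hA, hAc⟩)⟩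

theorem card_le_dichromatic_mul [Nonempty V] {m : ℕ} (hm : 2 ≤ m)
    (hE : ∀ A : Finset V, #A = m → Fintype.card V ^ m ≤ 2 ^ #(G.edgesIn A)) :
    Fintype.card V ≤ dichromatic G * (m - 1) := by
  obtain ⟨g, hg⟩ := G.exists_forall_card_eq_not_isAcyclicOn_orientBy hm hE
  have hD := G.isOrientation_orientBy g
  have hsmall (A : Finset V) (hA : IsAcyclicOn (G.orientBy g) A) : #A ≤ m - 1 := by
    by_contra! h
    obtain ⟨B, hBA, hB⟩ := exists_subset_card_eq (show m ≤ #A by omega)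
    exact hg B hB (hA.mono (coe_subset.2 hBA))
  calc Fintype.card V ≤ digraphChrom (G.orientBy g) * (m - 1) :=
        card_le_digraphChrom_mul hD.irrefl hsmall
    _ ≤ dichromatic G * (m - 1) := Nat.mul_le_mul_right _ (digraphChrom_le_dichromatic hD)

end SimpleGraph

theorem SimpleGraph.div_max_lt_dichromatic {V : Type*} [Fintype V] [Nonempty V]
    (G : SimpleGraph V) [DecidableRel G.Adj] {k : ℕ} (hk : 0 < k)
    (hnon : ∀ v, #{w | ¬ G.Adj v w} ≤ k) :
    (Fintype.card V : ℝ) / max (4 * Real.logb 2 (Fintype.card V)) (2 * k) < dichromatic G := by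
  let _ : LinearOrder V := LinearOrder.lift' _ (Fintype.equivFin V).injective
  set N := Fintype.card V
  set d := dichromatic G
  set L := 4 * Real.logb 2 (N : ℝ)
  have hN : (1 : ℝ) ≤ N := by exact_mod_cast Fintype.card_pos
  have hL : 0 ≤ L := mul_nonneg zero_le_four (Real.logb_nonneg one_lt_two hN)
  set m := max ⌈L⌉₊ (2 * k)
  have hLm : L ≤ m := (Nat.le_ceil L).trans (by exact_mod_cast le_max_left _ _)
  have hkm : 2 * k ≤ m := le_max_right _ _
  have hmM : (m : ℝ) - 1 < max L (2 * k) := by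
    have := Nat.ceil_lt_add_one hL
    rw [sub_lt_iff_lt_add, Nat.cast_max, max_lt_iff]
    push_cast
    constructor <;> linarith [le_max_left L (2 * k), le_max_right L (2 * k)]
  have hNd : (N : ℝ) ≤ d * ((m : ℝ) - 1) := by
    have := G.card_le_dichromatic_mul (m := m) (by omega) fun A hA =>
      G.pow_card_le_two_pow_card_edgesIn hnon hLm hkm hA
    rw [← Nat.cast_pred (by omega)]
    exact_mod_cast this
  have hd : (0 : ℝ) < d := by
    by_contra! h
    nlinarith [show (1 : ℝ) ≤ m by exact_mod_cast (show 1 ≤ m by omega)]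
  rw [div_lt_iff₀ (by positivity)]
  nlinarith

instance {α : Type*} (H : SimpleGraph α) [DecidableRel H.Adj] (m : ℕ) :
    DecidableRel (blowup H m).Adj :=
  fun a b => inferInstanceAs (Decidable (H.Adj a.1 b.1))

theorem card_filter_not_blowup_completeGraph_adj {n k : ℕ} (v : Fin n × Fin k) :
    #{w | ¬ (blowup (SimpleGraph.completeGraph (Fin n)) k).Adj v w} = k := by
  have : ({w | ¬ (blowup (SimpleGraph.completeGraph (Fin n)) k).Adj v w} : Finset _)
      = {v.1} ×ˢ univ := by
    ext ⟨a, b⟩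
    simp [blowup, eq_comm]
  simp [this]

theorem dichromatic_blowup_completeGraph_general (n k : ℕ) (hn : 0 < n) (hk : 0 < k) :
    min (((n * k : ℕ) : ℝ) / (4 * Real.logb 2 ((n * k : ℕ) : ℝ))) ((n : ℝ) / 2)
      < (dichromatic (blowup (SimpleGraph.completeGraph (Fin n)) k) : ℝ) := by
  have : Nonempty (Fin n × Fin k) := ⟨(⟨0, hn⟩, ⟨0, hk⟩)⟩
  have h := (blowup (SimpleGraph.completeGraph (Fin n)) k).div_max_lt_dichromatic hk
    fun v => (card_filter_not_blowup_completeGraph_adj v).le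
  rw [Fintype.card_prod, Fintype.card_fin, Fintype.card_fin] at h
  have hhalf : ((n * k : ℕ) : ℝ) / (2 * k) = n / 2 := by
    push_cast
    field_simp
  refine lt_of_le_of_lt ?_ h
  rcases le_total (4 * Real.logb 2 ((n * k : ℕ) : ℝ)) (2 * k) with hle | hle
  · rw [max_eq_right hle, hhalf]
    exact min_le_right _ _
  · rw [max_eq_left hle]
    exact min_le_left _ _

/-- **Theorem 3.4.** `χ⃗(K_n^(k)) > min{ nk / (4 log₂(nk)), n/2 }`. -/
theorem dichromatic_blowup_completeGraph (n k : ℕ) (hn : 0 < n) (hk : 0 < k)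
    (hnk : 2 ≤ n * k) :
    min (((n * k : ℕ) : ℝ) / (4 * Real.logb 2 ((n * k : ℕ) : ℝ))) ((n : ℝ) / 2)
      < (dichromatic (blowup (SimpleGraph.completeGraph (Fin n)) k) : ℝ) :=
  dichromatic_blowup_completeGraph_general n k hn hk
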